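/- arXiv:1110.3802 — 3 statements merged into one kernel-verified Lean document; each statement's English description precedes it below -/
import Mathlib

section
/- Let (i,j) be an edge of G and denote by λ_m(G';α) the m-th eigenvalue of H(G';α) = H(G) + B(i,j;α). For every α > 0: λ_{m−1}(G) ≤ λ_m(G';α) ≤ λ_m(G) for all m ≥ 2, and λ_1(G';α) ≤ λ_1(G). For every α < 0: λ_m(G) ≤ λ_m(G';α) ≤ λ_{m+1}(G) for all m ≤ V−1, and λ_V(G) ≤ λ_V(G';α). -/
open Matrix

open Classical in
/-- The discrete Schrödinger operator (Hamiltonian) `H(G) = -A(G) + Q` on the graph `G`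
with potential `q`, given entrywise: `q a` on the diagonal, `-1` on adjacent pairs of
vertices, and `0` otherwise. -/
noncomputable def Ham {V : ℕ} (G : SimpleGraph (Fin V)) (q : Fin V → ℝ) :
    Matrix (Fin V) (Fin V) ℝ :=
  Matrix.of fun a b => if a = b then q a else if G.Adj a b then -1 else 0

/-- The perturbation matrix `B(i,j;α)`: its only (potentially) nonzero entries are
`B i i = -α`, `B j j = -1/α` and `B i j = B j i = 1`. -/
noncomputable def Bmat {V : ℕ} (i j : Fin V) (α : ℝ) : Matrix (Fin V) (Fin V) ℝ :=
  Matrix.of fun a b =>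
    (if a = i ∧ b = i then -α else 0) + (if a = j ∧ b = j then -1/α else 0) +
      (if (a = i ∧ b = j) ∨ (a = j ∧ b = i) then 1 else 0)

lemma Ham_isHermitian {V : ℕ} (G : SimpleGraph (Fin V)) (q : Fin V → ℝ) :
    (Ham G q).IsHermitian := by
  classical
  unfold Matrix.IsHermitian
  ext a b
  simp only [Matrix.conjTranspose_apply, Ham, Matrix.of_apply, star_trivial]
  by_cases h : a = b
  · subst h; simp
  · simp [h, Ne.symm h, SimpleGraph.adj_comm]

lemma Bmat_isHermitian {V : ℕ} (i j : Fin V) (α : ℝ) : (Bmat i j α).IsHermitian := by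
  unfold Matrix.IsHermitian
  ext a b
  simp only [Matrix.conjTranspose_apply, Bmat, Matrix.of_apply, star_trivial]
  by_cases hai : a = i <;> by_cases haj : a = j <;> by_cases hbi : b = i <;>
    by_cases hbj : b = j <;> simp [hai, haj, hbi, hbj]

/-- The eigenvalues of a Hermitian matrix, sorted in nondecreasing order and
counted with multiplicity; `sortedEigs hM k` is the `(k+1)`-st smallest eigenvalue. -/
noncomputable def sortedEigs {n : ℕ} {M : Matrix (Fin n) (Fin n) ℝ} (hM : M.IsHermitian) :
    Fin n → ℝ :=
  hM.eigenvalues ∘ Tuple.sort hM.eigenvalues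

/-!
`B(i,j;α) = -α⁻¹ vvᵀ` with `v = α eᵢ - eⱼ`. Hence the quadratic form of `H(G';α)` lies below
(`α > 0`) or above (`α < 0`) that of `H(G)`, which orders the eigenvalues of equal index, and it
agrees with that of `H(G)` on the hyperplane `v⊥`, which shifts the index by at most one. Both are
instances of one Courant–Fischer dimension count: the span of the first `m + 1` eigenvectors of
one matrix, the span of the last `n - p` eigenvectors of the other, and a subspace of codimension
`m - p` on which the quadratic forms compare always share a nonzero vector.
-/

open Module RealInnerProductSpace

theorem Submodule.finrank_add_finrank_le_finrank_inf_add {K V : Type*} [DivisionRing K]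
    [AddCommGroup V] [Module K V] [FiniteDimensional K V] (U W : Submodule K V) :
    finrank K U + finrank K W ≤ finrank K ↥(U ⊓ W) + finrank K V := by
  rw [← Submodule.finrank_sup_add_finrank_inf_eq]
  have := Submodule.finrank_le (U ⊔ W)
  omega

theorem Module.Dual.finrank_le_finrank_ker_add_one {K V : Type*} [Field K] [AddCommGroup V]
    [Module K V] [FiniteDimensional K V] (f : Dual K V) :
    finrank K V ≤ finrank K (LinearMap.ker f) + 1 := by
  by_cases hf : f = 0
  · rw [hf, LinearMap.ker_zero, finrank_top]
    omega
  · rw [Module.Dual.finrank_ker_add_one_of_ne_zero hf]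

namespace OrthonormalBasis

variable {ι E : Type*} [Fintype ι] [NormedAddCommGroup E] [InnerProductSpace ℝ E]
  (b : OrthonormalBasis ι ℝ E)

theorem finrank_span_image (S : Finset ι) : finrank ℝ (Submodule.span ℝ (b '' S)) = S.card := by
  rw [Set.image_eq_range]
  exact (finrank_span_eq_card (b.orthonormal.linearIndependent.comp _ Subtype.coe_injective)).trans
    (by simp)

variable {T : E →ₗ[ℝ] E} {μ : ι → ℝ} {S : Set ι} {c : ℝ} {x : E}

theorem inner_apply_le_of_mem_span_image (hT : T.IsSymmetric) (hb : ∀ k, T (b k) = μ k • b k)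
    (hc : ∀ k ∈ S, μ k ≤ c) (hx : x ∈ Submodule.span ℝ (b '' S)) :
    ⟪x, T x⟫ ≤ c * ⟪x, x⟫ := by
  have h_out : ∀ k ∉ S, ⟪b k, x⟫ = 0 := by
    intro k hk
    have : Submodule.span ℝ (b '' S) ≤ LinearMap.ker (innerₛₗ ℝ (b k)) := by
      rw [Submodule.span_le]
      rintro _ ⟨l, hl, rfl⟩
      exact b.orthonormal.2 (fun h => hk (h ▸ hl))
    exact this hx
  have h_coord : ∀ k, ⟪x, b k⟫ * ⟪b k, T x⟫ = μ k * ⟪b k, x⟫ ^ 2 := by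
    intro k
    rw [← hT, hb, real_inner_smul_left, real_inner_comm x]
    ring
  calc ⟪x, T x⟫ = ∑ k, μ k * ⟪b k, x⟫ ^ 2 := by
        simp_rw [← h_coord, b.sum_inner_mul_inner]
    _ ≤ ∑ k, c * ⟪b k, x⟫ ^ 2 := by
        refine Finset.sum_le_sum fun k _ => ?_
        by_cases hk : k ∈ S
        · exact mul_le_mul_of_nonneg_right (hc k hk) (sq_nonneg _)
        · simp [h_out k hk]
    _ = c * ⟪x, x⟫ := by
        simp_rw [← b.sum_inner_mul_inner x x, Finset.mul_sum, real_inner_comm x, sq]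

theorem le_inner_apply_of_mem_span_image (hT : T.IsSymmetric) (hb : ∀ k, T (b k) = μ k • b k)
    (hc : ∀ k ∈ S, c ≤ μ k) (hx : x ∈ Submodule.span ℝ (b '' S)) :
    c * ⟪x, x⟫ ≤ ⟪x, T x⟫ := by
  have := b.inner_apply_le_of_mem_span_image (T := -T) (μ := -μ) (c := -c)
    (fun u v => by simp [hT u v]) (fun k => by simp [hb k]) (fun k hk => neg_le_neg (hc k hk)) hx
  simp only [LinearMap.neg_apply, inner_neg_right, neg_mul] at this
  linarith

end OrthonormalBasis

section SortedEigenvalues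

variable {n : ℕ} {M N : Matrix (Fin n) (Fin n) ℝ}

noncomputable def sortedBasis (hM : M.IsHermitian) :
    OrthonormalBasis (Fin n) ℝ (EuclideanSpace ℝ (Fin n)) :=
  hM.eigenvectorBasis.reindex (Tuple.sort hM.eigenvalues).symm

theorem toEuclideanLin_sortedBasis (hM : M.IsHermitian) (k : Fin n) :
    toEuclideanLin M (sortedBasis hM k) = sortedEigs hM k • sortedBasis hM k := by
  have := hM.mulVec_eigenvectorBasis (Tuple.sort hM.eigenvalues k)
  simpa [sortedBasis, sortedEigs, toLpLin_apply] using congrArg (WithLp.toLp 2) this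

theorem inner_toEuclideanLin_le_of_mem_span_Iic (hM : M.IsHermitian) {m : Fin n}
    {x : EuclideanSpace ℝ (Fin n)}
    (hx : x ∈ Submodule.span ℝ (sortedBasis hM '' (Finset.Iic m : Finset (Fin n)))) :
    ⟪x, toEuclideanLin M x⟫ ≤ sortedEigs hM m * ⟪x, x⟫ :=
  (sortedBasis hM).inner_apply_le_of_mem_span_image (isSymmetric_toEuclideanLin_iff.mpr hM)
    (toEuclideanLin_sortedBasis hM)
    (fun _ hk => Tuple.monotone_sort _ (Finset.mem_Iic.mp hk)) hx

theorem le_inner_toEuclideanLin_of_mem_span_Ici (hM : M.IsHermitian) {p : Fin n}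
    {x : EuclideanSpace ℝ (Fin n)}
    (hx : x ∈ Submodule.span ℝ (sortedBasis hM '' (Finset.Ici p : Finset (Fin n)))) :
    sortedEigs hM p * ⟪x, x⟫ ≤ ⟪x, toEuclideanLin M x⟫ :=
  (sortedBasis hM).le_inner_apply_of_mem_span_image (isSymmetric_toEuclideanLin_iff.mpr hM)
    (toEuclideanLin_sortedBasis hM)
    (fun _ hk => Tuple.monotone_sort _ (Finset.mem_Ici.mp hk)) hx

theorem sortedEigs_le_of_inner_le_on (hM : M.IsHermitian) (hN : N.IsHermitian)
    {K : Submodule ℝ (EuclideanSpace ℝ (Fin n))} {d : ℕ} (hK : n ≤ finrank ℝ K + d)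
    (h : ∀ x ∈ K, ⟪x, toEuclideanLin N x⟫ ≤ ⟪x, toEuclideanLin M x⟫)
    {p m : Fin n} (hpm : (p : ℕ) + d = m) : sortedEigs hN p ≤ sortedEigs hM m := by
  set U := Submodule.span ℝ (sortedBasis hM '' (Finset.Iic m : Finset (Fin n)))
  set W := Submodule.span ℝ (sortedBasis hN '' (Finset.Ici p : Finset (Fin n)))
  have hU : finrank ℝ U = (m : ℕ) + 1 := by
    rw [OrthonormalBasis.finrank_span_image, Fin.card_Iic]
  have hW : finrank ℝ W = n - (p : ℕ) := by
    rw [OrthonormalBasis.finrank_span_image, Fin.card_Ici]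
  have hUW := Submodule.finrank_add_finrank_le_finrank_inf_add U W
  have hUWK := Submodule.finrank_add_finrank_le_finrank_inf_add (U ⊓ W) K
  rw [finrank_euclideanSpace_fin] at hUW hUWK
  have h_meet : 1 ≤ finrank ℝ ↥(U ⊓ W ⊓ K) := by
    have := p.isLt
    omega
  obtain ⟨x, ⟨⟨hxU, hxW⟩, hxK⟩, hx0⟩ :=
    Submodule.exists_mem_ne_zero_of_ne_bot (Submodule.one_le_finrank_iff.mp h_meet)
  have hxx : 0 < ⟪x, x⟫ := real_inner_self_pos.mpr hx0
  have := le_inner_toEuclideanLin_of_mem_span_Ici hN hxW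
  have := inner_toEuclideanLin_le_of_mem_span_Iic hM hxU
  have := h x hxK
  exact le_of_mul_le_mul_right (by linarith) hxx

theorem sortedEigs_interlace_of_inner_eq_add_mul_sq (hM : M.IsHermitian) (hN : N.IsHermitian)
    (φ : Dual ℝ (EuclideanSpace ℝ (Fin n))) {c : ℝ} (hc : c ≤ 0)
    (h : ∀ x, ⟪x, toEuclideanLin N x⟫ = ⟪x, toEuclideanLin M x⟫ + c * φ x ^ 2) :
    (∀ m, sortedEigs hN m ≤ sortedEigs hM m) ∧
      ∀ p m : Fin n, (p : ℕ) + 1 = m → sortedEigs hM p ≤ sortedEigs hN m := by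
  refine ⟨fun m => sortedEigs_le_of_inner_le_on hM hN (K := ⊤) (d := 0) (by simp) ?_ rfl,
    fun p m hpm => sortedEigs_le_of_inner_le_on hN hM
      (by simpa using φ.finrank_le_finrank_ker_add_one) ?_ hpm⟩
  · intro x _
    nlinarith [h x, sq_nonneg (φ x)]
  · intro x hx
    simp [h x, LinearMap.mem_ker.mp hx]

end SortedEigenvalues

theorem Bmat_eq_smul_vecMulVec {n : ℕ} {i j : Fin n} (hij : i ≠ j) {α : ℝ} (hα : α ≠ 0) :
    Bmat i j α =
      (-α⁻¹) • vecMulVec (Pi.single i α - Pi.single j 1) (Pi.single i α - Pi.single j 1) := by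
  ext a b
  simp only [Bmat, of_apply, Matrix.smul_apply, vecMulVec_apply, Pi.sub_apply, Pi.single_apply,
    smul_eq_mul]
  by_cases hai : a = i <;> by_cases haj : a = j <;> by_cases hbi : b = i <;>
    by_cases hbj : b = j <;> simp_all [neg_div]

theorem inner_toEuclideanLin_add_smul_vecMulVec {n : ℕ} (M : Matrix (Fin n) (Fin n) ℝ) (c : ℝ)
    (v : Fin n → ℝ) (x : EuclideanSpace ℝ (Fin n)) :
    ⟪x, toEuclideanLin (M + c • vecMulVec v v) x⟫ =
      ⟪x, toEuclideanLin M x⟫ + c * innerₛₗ ℝ (WithLp.toLp 2 v) x ^ 2 := by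
  have h_rank_one : toEuclideanLin (vecMulVec v v) x = ⟪WithLp.toLp 2 v, x⟫ • WithLp.toLp 2 v := by
    change WithLp.toLp 2 (vecMulVec v v *ᵥ x.ofLp) = _
    rw [vecMulVec_mulVec, op_smul_eq_smul, WithLp.toLp_smul,
      EuclideanSpace.inner_eq_star_dotProduct]
    simp [dotProduct_comm]
  rw [map_add, map_smul, LinearMap.add_apply, LinearMap.smul_apply, inner_add_right,
    real_inner_smul_right, h_rank_one, real_inner_smul_right, real_inner_comm (WithLp.toLp 2 v) x,
    innerₛₗ_apply_apply]
  ring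

theorem stmt_5_general {V : ℕ} (G : SimpleGraph (Fin V)) (q : Fin V → ℝ)
    (i j : Fin V) (hij : G.Adj i j) (α : ℝ) :
    (0 < α →
      (∀ m : Fin V,
        sortedEigs ((Ham_isHermitian G q).add (Bmat_isHermitian i j α)) m
          ≤ sortedEigs (Ham_isHermitian G q) m) ∧
      (∀ m : Fin V, 0 < (m : ℕ) →
        sortedEigs (Ham_isHermitian G q) ⟨(m : ℕ) - 1, lt_of_le_of_lt (Nat.sub_le _ 1) m.isLt⟩
          ≤ sortedEigs ((Ham_isHermitian G q).add (Bmat_isHermitian i j α)) m)) ∧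
    (α < 0 →
      (∀ m : Fin V,
        sortedEigs (Ham_isHermitian G q) m
          ≤ sortedEigs ((Ham_isHermitian G q).add (Bmat_isHermitian i j α)) m) ∧
      (∀ m : Fin V, ∀ h : (m : ℕ) + 1 < V,
        sortedEigs ((Ham_isHermitian G q).add (Bmat_isHermitian i j α)) m
          ≤ sortedEigs (Ham_isHermitian G q) ⟨(m : ℕ) + 1, h⟩)) := by
  set v : Fin V → ℝ := Pi.single i α - Pi.single j 1
  have h_form : α ≠ 0 → ∀ x, ⟪x, toEuclideanLin (Ham G q + Bmat i j α) x⟫ =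
      ⟪x, toEuclideanLin (Ham G q) x⟫ + -α⁻¹ * innerₛₗ ℝ (WithLp.toLp 2 v) x ^ 2 := fun hα x => by
    rw [Bmat_eq_smul_vecMulVec hij.ne hα, inner_toEuclideanLin_add_smul_vecMulVec]
  refine ⟨fun hα => ?_, fun hα => ?_⟩
  · obtain ⟨h_le, h_succ⟩ := sortedEigs_interlace_of_inner_eq_add_mul_sq (Ham_isHermitian G q)
      ((Ham_isHermitian G q).add (Bmat_isHermitian i j α)) _ (by simpa using hα.le) (h_form hα.ne')
    exact ⟨h_le, fun m hm => h_succ _ m (by simp only; omega)⟩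
  · obtain ⟨h_le, h_succ⟩ := sortedEigs_interlace_of_inner_eq_add_mul_sq
      ((Ham_isHermitian G q).add (Bmat_isHermitian i j α)) (Ham_isHermitian G q) _
      (inv_nonpos.mpr hα.le) (fun x => by rw [h_form hα.ne x]; ring)
    exact ⟨h_le, fun m h => h_succ m _ rfl⟩

/-- **interlacing.** For the edge `(i,j)` of `G` and `H(G';α) = H(G) + B(i,j;α)`:
for `α > 0` one has `λ_{m-1}(G) ≤ λ_m(G';α) ≤ λ_m(G)` (for `m ≥ 2`) and
`λ_1(G';α) ≤ λ_1(G)`; for `α < 0` one has `λ_m(G) ≤ λ_m(G';α) ≤ λ_{m+1}(G)` (for `m ≤ V-1`)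
and `λ_V(G) ≤ λ_V(G';α)`.  (Eigenvalue positions are indexed from `0` here.) -/
theorem stmt_5 {V : ℕ} (G : SimpleGraph (Fin V)) (hG : G.Connected) (q : Fin V → ℝ)
    (i j : Fin V) (hij : G.Adj i j) (α : ℝ) :
    (0 < α →
      (∀ m : Fin V,
        sortedEigs ((Ham_isHermitian G q).add (Bmat_isHermitian i j α)) m
          ≤ sortedEigs (Ham_isHermitian G q) m) ∧
      (∀ m : Fin V, 0 < (m : ℕ) →
        sortedEigs (Ham_isHermitian G q) ⟨(m : ℕ) - 1, lt_of_le_of_lt (Nat.sub_le _ 1) m.isLt⟩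
          ≤ sortedEigs ((Ham_isHermitian G q).add (Bmat_isHermitian i j α)) m)) ∧
    (α < 0 →
      (∀ m : Fin V,
        sortedEigs (Ham_isHermitian G q) m
          ≤ sortedEigs ((Ham_isHermitian G q).add (Bmat_isHermitian i j α)) m) ∧
      (∀ m : Fin V, ∀ h : (m : ℕ) + 1 < V,
        sortedEigs ((Ham_isHermitian G q).add (Bmat_isHermitian i j α)) m
          ≤ sortedEigs (Ham_isHermitian G q) ⟨(m : ℕ) + 1, h⟩)) :=
  stmt_5_general G q i j hij α
end

section
/- Let G' be a connected factor of G obtained by deleting a set S of k ≤ β(G) edges, and let f^{(n)} be a non-degenerate eigenvector of H(G) corresponding to λ_n(G). For each e = (i,j) ∈ S with i < j set α^c_e = f^{(n)}_j / f^{(n)}_i, and define H(G';α^c) = H(G) + Σ_{e∈S} B(e;α^c_e). Then f^{(n)} is an eigenvector of H(G';α^c) with eigenvalue λ_n(G), and if this eigenvalue occupies position m in the nondecreasing spectrum of H(G';α^c), then |n − m| ≤ k. -/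
open Matrix

lemma sum_Bmat_isHermitian {V : ℕ} (S : Finset (Fin V × Fin V)) (α : Fin V × Fin V → ℝ) :
    (∑ p ∈ S, Bmat p.1 p.2 (α p)).IsHermitian := by
  unfold Matrix.IsHermitian
  rw [Matrix.conjTranspose_sum]
  exact Finset.sum_congr rfl fun p _ => Bmat_isHermitian p.1 p.2 (α p)

/-- The first Betti number `β(G) = E - V + 1` of the graph `G` (as an integer). -/
noncomputable def betti {V : ℕ} (G : SimpleGraph (Fin V)) : ℤ :=
  (G.edgeSet.ncard : ℤ) - V + 1

/-!
Each `B(e; α)` with `α = f_j / f_i` annihilates every vector `x` with `x_j = α x_i`, in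
particular `f`, so `H(G'; α^c)` agrees with `H(G)` on a subspace `K` of codimension at most `k`,
and `f` is still an eigenvector. The spectra are then compared by a Courant–Fischer count: on
`K ∩ W`, where `W` is spanned by the eigenvectors of `H(G)` with eigenvalue `< λ`, the quadratic
form of `H(G'; α^c)` is `< λ ‖x‖²`, so `H(G'; α^c)` has at least `#{i | λ_i(G) < λ} - k`
eigenvalues below `λ`, and symmetrically above `λ`. As `λ = λ_n(G)` is simple, `n` eigenvalues
of `H(G)` lie below it and `V - 1 - n` above it, which puts `λ` at a position `m` of the
spectrum of `H(G'; α^c)` with `|n - m| ≤ k`.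
-/

open Module Submodule Finset
open scoped RealInnerProductSpace

theorem finrank_le_finrank_orthogonal_span_image_add_card {κ E : Type*} [NormedAddCommGroup E]
    [InnerProductSpace ℝ E] [FiniteDimensional ℝ E] (v : κ → E) (s : Finset κ) :
    finrank ℝ E ≤ finrank ℝ (span ℝ (v '' s))ᗮ + #s := by
  have h1 := (span ℝ (v '' s)).finrank_add_finrank_orthogonal
  have h2 : finrank ℝ (span ℝ (v '' s)) ≤ #s := by
    have := finrank_range_le_card (R := ℝ) fun i : (s : Set κ) => v i
    rw [← Set.image_eq_range, Set.finrank] at this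
    exact this.trans_eq (by simp)
  omega

section OrthonormalEigenbasis

variable {ι κ E : Type*} [Fintype ι] [NormedAddCommGroup E] [InnerProductSpace ℝ E]
  (b : OrthonormalBasis ι ℝ E) {T : E →ₗ[ℝ] E} {μ : ι → ℝ}

theorem OrthonormalBasis.inner_apply_eq_of_apply_eq_smul (hT : ∀ i, T (b i) = μ i • b i)
    (i : ι) (x : E) : ⟪b i, T x⟫ = μ i * ⟪b i, x⟫ := by
  conv_lhs => rw [← b.sum_repr' x]
  simp only [map_sum, map_smul, hT, smul_smul]
  exact b.orthonormal.inner_right_fintype (fun j => ⟪b j, x⟫ * μ j) i |>.trans (mul_comm _ _)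

theorem OrthonormalBasis.inner_apply_self_sub_eq_sum (hT : ∀ i, T (b i) = μ i • b i)
    (t : ℝ) (x : E) : ⟪x, T x⟫ - t * ⟪x, x⟫ = ∑ i, (μ i - t) * ⟪b i, x⟫ ^ 2 := by
  rw [← b.sum_inner_mul_inner x (T x), ← b.sum_inner_mul_inner x x, mul_sum, ← sum_sub_distrib]
  refine sum_congr rfl fun i _ => ?_
  rw [b.inner_apply_eq_of_apply_eq_smul hT, real_inner_comm x]
  ring

theorem OrthonormalBasis.inner_apply_self_lt (hT : ∀ i, T (b i) = μ i • b i) {t : ℝ} {x : E}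
    (hx : x ∈ (span ℝ (b '' {i | t ≤ μ i}))ᗮ) (hx0 : x ≠ 0) : ⟪x, T x⟫ < t * ⟪x, x⟫ := by
  have hcoeff : ∀ i, t ≤ μ i → ⟪b i, x⟫ = 0 := fun i hi =>
    (mem_orthogonal _ x).1 hx _ (subset_span ⟨i, hi, rfl⟩)
  obtain ⟨j, hj⟩ : ∃ j, ⟪b j, x⟫ ≠ 0 := by
    by_contra! h
    exact hx0 (by rw [← b.sum_repr' x]; simp [h])
  have hjt : μ j < t := lt_of_not_ge fun h => hj (hcoeff j h)
  suffices ∑ i, (μ i - t) * ⟪b i, x⟫ ^ 2 < ∑ _i : ι, (0 : ℝ) by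
    rw [← b.inner_apply_self_sub_eq_sum hT] at this
    simpa using this
  refine sum_lt_sum (fun i _ => ?_) ⟨j, mem_univ j, ?_⟩
  · by_cases hi : t ≤ μ i
    · simp [hcoeff i hi]
    · exact mul_nonpos_of_nonpos_of_nonneg (by linarith) (sq_nonneg _)
  · exact mul_neg_of_neg_of_pos (by linarith) (by positivity)

variable [FiniteDimensional ℝ E]

theorem OrthonormalBasis.finrank_le_card_lt (hT : ∀ i, T (b i) = μ i • b i) {t : ℝ}
    (W : Submodule ℝ E) (hW : ∀ x ∈ W, x ≠ 0 → ⟪x, T x⟫ < t * ⟪x, x⟫) :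
    finrank ℝ W ≤ #{i | μ i < t} := by
  set s : Finset ι := {i | μ i < t}
  have hWs : Disjoint W (span ℝ (b '' s))ᗮ := by
    refine Submodule.disjoint_def.2 fun x hxW hxs => by_contra fun hx0 => ?_
    have : 0 ≤ ⟪x, T x⟫ - t * ⟪x, x⟫ := by
      rw [b.inner_apply_self_sub_eq_sum hT]
      refine sum_nonneg fun i _ => ?_
      by_cases hi : μ i < t
      · have : ⟪b i, x⟫ = 0 := (mem_orthogonal _ x).1 hxs _ (subset_span ⟨i, by simp [s, hi], rfl⟩)
        simp [this]
      · exact mul_nonneg (by linarith) (sq_nonneg _)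
    linarith [hW x hxW hx0]
  have := finrank_add_finrank_le_of_disjoint hWs
  have := finrank_le_finrank_orthogonal_span_image_add_card b s
  omega

theorem OrthonormalBasis.card_lt_le_card_lt_add {ι' : Type*} [Fintype ι']
    (b' : OrthonormalBasis ι' ℝ E) {T' : E →ₗ[ℝ] E} {μ' : ι' → ℝ}
    (hT : ∀ i, T (b i) = μ i • b i) (hT' : ∀ i, T' (b' i) = μ' i • b' i)
    (v : κ → E) (s : Finset κ) (hTT' : ∀ x ∈ (span ℝ (v '' s))ᗮ, T x = T' x) (t : ℝ) :
    #{i | μ i < t} ≤ #{i | μ' i < t} + #s := by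
  set K := (span ℝ (v '' s))ᗮ
  set N := (span ℝ (b '' ↑({i | t ≤ μ i} : Finset ι)))ᗮ
  have hKN : finrank ℝ ↥(K ⊓ N) ≤ #{i | μ' i < t} := by
    refine b'.finrank_le_card_lt hT' _ fun x hx hx0 => ?_
    rw [← hTT' x (mem_inf.1 hx).1]
    exact b.inner_apply_self_lt hT (by simpa [N] using (mem_inf.1 hx).2) hx0
  have := finrank_sup_add_finrank_inf_eq K N
  have := (K ⊔ N).finrank_le
  have : finrank ℝ E ≤ finrank ℝ K + #s := finrank_le_finrank_orthogonal_span_image_add_card v s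
  have : finrank ℝ E ≤ finrank ℝ N + #{i | t ≤ μ i} :=
    finrank_le_finrank_orthogonal_span_image_add_card b _
  have : #{i | μ i < t} + #{i | t ≤ μ i} = finrank ℝ E := by
    rw [finrank_eq_card_basis b.toBasis, ← card_univ]
    simpa only [not_lt] using card_filter_add_card_filter_not (s := univ) (fun i => μ i < t)
  omega

theorem OrthonormalBasis.card_gt_le_card_gt_add {ι' : Type*} [Fintype ι']
    (b' : OrthonormalBasis ι' ℝ E) {T' : E →ₗ[ℝ] E} {μ' : ι' → ℝ}
    (hT : ∀ i, T (b i) = μ i • b i) (hT' : ∀ i, T' (b' i) = μ' i • b' i)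
    (v : κ → E) (s : Finset κ) (hTT' : ∀ x ∈ (span ℝ (v '' s))ᗮ, T x = T' x) (t : ℝ) :
    #{i | t < μ i} ≤ #{i | t < μ' i} + #s := by
  simpa using b.card_lt_le_card_lt_add b' (T := -T) (T' := -T') (μ := -μ) (μ' := -μ')
    (by simp [hT]) (by simp [hT']) v s (by simp +contextual [hTT']) (-t)

end OrthonormalEigenbasis

namespace Matrix.IsHermitian

variable {ι κ : Type*} [Fintype ι] [DecidableEq ι] {A B : Matrix ι ι ℝ}

theorem toEuclideanLin_eigenvectorBasis (hA : A.IsHermitian) (i : ι) :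
    toEuclideanLin A (hA.eigenvectorBasis i) = hA.eigenvalues i • hA.eigenvectorBasis i :=
  WithLp.ofLp_injective 2 (hA.mulVec_eigenvectorBasis i)

theorem toEuclideanLin_eq_of_mem_orthogonal (w : κ → ι → ℝ) (s : Finset κ)
    (hAB : ∀ x, (∀ p ∈ s, w p ⬝ᵥ x = 0) → A *ᵥ x = B *ᵥ x) :
    ∀ x ∈ (span ℝ ((fun p => WithLp.toLp 2 (w p)) '' s))ᗮ,
      toEuclideanLin A x = toEuclideanLin B x := by
  intro x hx
  have hw : ∀ p ∈ s, w p ⬝ᵥ x.ofLp = 0 := fun p hp => by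
    have := (mem_orthogonal _ x).1 hx _ (subset_span ⟨p, hp, rfl⟩)
    rwa [EuclideanSpace.inner_eq_star_dotProduct, star_trivial, dotProduct_comm] at this
  exact WithLp.ofLp_injective 2 (hAB _ hw)

theorem card_eigenvalues_lt_le_add (hA : A.IsHermitian) (hB : B.IsHermitian)
    (w : κ → ι → ℝ) (s : Finset κ) (hAB : ∀ x, (∀ p ∈ s, w p ⬝ᵥ x = 0) → A *ᵥ x = B *ᵥ x)
    (t : ℝ) : #{i | hA.eigenvalues i < t} ≤ #{i | hB.eigenvalues i < t} + #s :=
  hA.eigenvectorBasis.card_lt_le_card_lt_add hB.eigenvectorBasis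
    hA.toEuclideanLin_eigenvectorBasis hB.toEuclideanLin_eigenvectorBasis _ s
    (toEuclideanLin_eq_of_mem_orthogonal w s hAB) t

theorem card_eigenvalues_gt_le_add (hA : A.IsHermitian) (hB : B.IsHermitian)
    (w : κ → ι → ℝ) (s : Finset κ) (hAB : ∀ x, (∀ p ∈ s, w p ⬝ᵥ x = 0) → A *ᵥ x = B *ᵥ x)
    (t : ℝ) : #{i | t < hA.eigenvalues i} ≤ #{i | t < hB.eigenvalues i} + #s :=
  hA.eigenvectorBasis.card_gt_le_card_gt_add hB.eigenvectorBasis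
    hA.toEuclideanLin_eigenvectorBasis hB.toEuclideanLin_eigenvectorBasis _ s
    (toEuclideanLin_eq_of_mem_orthogonal w s hAB) t

theorem mem_range_eigenvalues {M : Matrix ι ι ℝ} (hM : M.IsHermitian) {x : ι → ℝ} (hx : x ≠ 0)
    {t : ℝ} (h : M *ᵥ x = t • x) : t ∈ Set.range hM.eigenvalues := by
  rw [← hM.spectrum_real_eq_range_eigenvalues, ← spectrum_toLin']
  exact Module.End.HasEigenvalue.mem_spectrum
    (Module.End.hasEigenvalue_of_hasEigenvector ⟨Module.End.mem_eigenspace_iff.2 h, hx⟩)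

end Matrix.IsHermitian

section LinearOrder

variable {α : Type*} [LinearOrder α]

theorem card_filter_lt_add_card_filter_gt_lt_card {ι : Type*} [Fintype ι] {e : ι → α} {t : α}
    (ht : t ∈ Set.range e) : #{i | e i < t} + #{i | t < e i} < Fintype.card ι := by
  obtain ⟨j, rfl⟩ := ht
  have := card_filter_add_card_filter_not (s := univ) (fun i => e i < e j)
  have : #{i | e j < e i} < #{i | ¬ e i < e j} := by
    refine card_lt_card ⟨fun i hi => ?_, fun h => ?_⟩
    · simp only [mem_filter_univ, not_lt] at hi ⊢
      exact hi.le
    · simpa using h (by simp : j ∈ _)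
  rw [card_univ] at *
  omega

variable {V : ℕ} {e : Fin V → α}

theorem Monotone.card_filter_lt_apply (he : Monotone e) {n : Fin V}
    (hn : ∀ k, e k = e n → k = n) : #{i | e i < e n} = n := by
  have : ∀ i, e i < e n ↔ i < n := fun i =>
    ⟨fun h => lt_of_not_ge fun hni => h.not_ge (he hni),
     fun h => (he h.le).lt_of_ne fun hi => h.ne (hn i hi)⟩
  simp only [this, filter_gt_eq_Iio, Fin.card_Iio]

theorem Monotone.card_filter_apply_lt (he : Monotone e) {n : Fin V}
    (hn : ∀ k, e k = e n → k = n) : #{i | e n < e i} = V - 1 - n := by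
  have : ∀ i, e n < e i ↔ n < i := fun i =>
    ⟨fun h => lt_of_not_ge fun hni => h.not_ge (he hni),
     fun h => (he h.le).lt_of_ne fun hi => h.ne' (hn i hi.symm)⟩
  simp only [this, filter_lt_eq_Ioi, Fin.card_Ioi]

theorem Monotone.exists_apply_eq_card_filter_lt (he : Monotone e) {t : α}
    (ht : t ∈ Set.range e) : ∃ m : Fin V, e m = t ∧ (m : ℕ) = #{i | e i < t} := by
  obtain ⟨p, rfl⟩ := ht
  have hne : ({i | e p ≤ e i} : Finset (Fin V)).Nonempty := ⟨p, by simp⟩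
  set m := ({i | e p ≤ e i} : Finset (Fin V)).min' hne
  have hpm : e p ≤ e m := by simpa using min'_mem _ hne
  have hlt : ∀ i, e i < e p ↔ i < m := fun i =>
    ⟨fun h => lt_of_not_ge fun hmi => h.not_ge (hpm.trans (he hmi)),
     fun h => lt_of_not_ge fun hi => h.not_ge (min'_le _ i (by simpa using hi))⟩
  refine ⟨m, le_antisymm (he (min'_le _ p (by simp))) hpm, ?_⟩
  simp only [hlt, filter_gt_eq_Iio, Fin.card_Iio]

end LinearOrder

section SortedEigenvalues

variable {V : ℕ} {M : Matrix (Fin V) (Fin V) ℝ} (hM : M.IsHermitian)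

theorem sortedEigs_monotone : Monotone (sortedEigs hM) := Tuple.monotone_sort _

theorem card_filter_sortedEigs (P : ℝ → Prop) [DecidablePred P] :
    #{i | P (sortedEigs hM i)} = #{i | P (hM.eigenvalues i)} :=
  card_equiv (Tuple.sort hM.eigenvalues) fun i => by simp only [mem_filter_univ]; rfl

theorem card_eigenvalues_lt_sortedEigs {n : Fin V}
    (hn : ∀ k, sortedEigs hM k = sortedEigs hM n → k = n) :
    #{i | hM.eigenvalues i < sortedEigs hM n} = n :=
  (card_filter_sortedEigs hM (· < _)).symm.trans ((sortedEigs_monotone hM).card_filter_lt_apply hn)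

theorem card_eigenvalues_gt_sortedEigs {n : Fin V}
    (hn : ∀ k, sortedEigs hM k = sortedEigs hM n → k = n) :
    #{i | sortedEigs hM n < hM.eigenvalues i} = V - 1 - n :=
  (card_filter_sortedEigs hM (_ < ·)).symm.trans ((sortedEigs_monotone hM).card_filter_apply_lt hn)

theorem exists_sortedEigs_eq_card_eigenvalues_lt {t : ℝ} (ht : t ∈ Set.range hM.eigenvalues) :
    ∃ m : Fin V, sortedEigs hM m = t ∧ (m : ℕ) = #{i | hM.eigenvalues i < t} := by
  rw [← card_filter_sortedEigs hM (· < t)]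
  refine (sortedEigs_monotone hM).exists_apply_eq_card_filter_lt ?_
  rwa [sortedEigs, (Tuple.sort hM.eigenvalues).surjective.range_comp]

end SortedEigenvalues

theorem Bmat_mulVec_eq_zero {V : ℕ} {i j : Fin V} (hij : i ≠ j) {α : ℝ} (hα : α ≠ 0)
    {x : Fin V → ℝ} (hx : x j = α * x i) : Bmat i j α *ᵥ x = 0 := by
  ext a
  simp only [mulVec, dotProduct, Bmat, of_apply, add_mul, ite_mul, zero_mul, one_mul,
    sum_add_distrib, ite_or, ite_and, sum_ite_eq', sum_ite_irrel, sum_const_zero, mem_univ,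
    if_true, Pi.zero_apply]
  rcases eq_or_ne a i with rfl | hai
  · simp [hij, hx]
  · rcases eq_or_ne a j with rfl | haj
    · simp only [hai, ↓reduceIte, hx, zero_add]
      field_simp
      ring
    · simp [hai, haj]

theorem add_sum_Bmat_mulVec {V : ℕ} (M : Matrix (Fin V) (Fin V) ℝ) {S : Finset (Fin V × Fin V)}
    (hS : ∀ p ∈ S, p.1 ≠ p.2) {α : Fin V × Fin V → ℝ} (hα : ∀ p ∈ S, α p ≠ 0)
    {x : Fin V → ℝ} (hx : ∀ p ∈ S, x p.2 = α p * x p.1) :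
    (M + ∑ p ∈ S, Bmat p.1 p.2 (α p)) *ᵥ x = M *ᵥ x := by
  rw [add_mulVec, sum_mulVec,
    sum_eq_zero fun p hp => Bmat_mulVec_eq_zero (hS p hp) (hα p hp) (hx p hp), add_zero]

theorem stmt_9_general {V : ℕ} (G : SimpleGraph (Fin V)) (q : Fin V → ℝ)
    (S : Finset (Fin V × Fin V))
    (hSlt : ∀ p ∈ S, p.1 < p.2)
    (f : Fin V → ℝ) (n : Fin V)
    (heig : Ham G q *ᵥ f = sortedEigs (Ham_isHermitian G q) n • f)
    (hnz : ∀ v, f v ≠ 0)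
    (hsimple : ∀ k : Fin V,
      sortedEigs (Ham_isHermitian G q) k = sortedEigs (Ham_isHermitian G q) n → k = n) :
    (Ham G q + ∑ p ∈ S, Bmat p.1 p.2 (f p.2 / f p.1)) *ᵥ f
        = sortedEigs (Ham_isHermitian G q) n • f ∧
    ∃ m : Fin V,
      sortedEigs ((Ham_isHermitian G q).add
          (sum_Bmat_isHermitian S fun p => f p.2 / f p.1)) m
        = sortedEigs (Ham_isHermitian G q) n ∧
      ((n : ℤ) - (m : ℤ)).natAbs ≤ S.card := by
  have hS : ∀ p ∈ S, p.1 ≠ p.2 := fun p hp => (hSlt p hp).ne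
  have hα : ∀ p ∈ S, f p.2 / f p.1 ≠ 0 := fun p _ => div_ne_zero (hnz _) (hnz _)
  have hf : (Ham G q + ∑ p ∈ S, Bmat p.1 p.2 (f p.2 / f p.1)) *ᵥ f
      = sortedEigs (Ham_isHermitian G q) n • f := by
    rw [add_sum_Bmat_mulVec _ hS hα fun p _ => (div_mul_cancel₀ _ (hnz p.1)).symm, heig]
  refine ⟨hf, ?_⟩
  set t := sortedEigs (Ham_isHermitian G q) n
  have hH : (Ham G q).IsHermitian := Ham_isHermitian G q
  have hH' := hH.add (sum_Bmat_isHermitian S fun p => f p.2 / f p.1)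
  have hagree : ∀ x, (∀ p ∈ S, (Pi.single p.2 1 - (f p.2 / f p.1) • Pi.single p.1 1) ⬝ᵥ x = 0) →
      Ham G q *ᵥ x = (Ham G q + ∑ p ∈ S, Bmat p.1 p.2 (f p.2 / f p.1)) *ᵥ x :=
    fun x hx => (add_sum_Bmat_mulVec _ hS hα fun p hp => by
      simpa [sub_dotProduct, single_dotProduct, sub_eq_zero] using hx p hp).symm
  have hlt := hH.card_eigenvalues_lt_le_add hH' _ S hagree t
  have hgt := hH.card_eigenvalues_gt_le_add hH' _ S hagree t
  rw [card_eigenvalues_lt_sortedEigs hH hsimple] at hlt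
  rw [card_eigenvalues_gt_sortedEigs hH hsimple] at hgt
  have ht : t ∈ Set.range hH'.eigenvalues :=
    hH'.mem_range_eigenvalues (fun h => hnz n (by simp [h])) hf
  have hcount := card_filter_lt_add_card_filter_gt_lt_card ht
  rw [Fintype.card_fin] at hcount
  obtain ⟨m, hm, hmcard⟩ := exists_sortedEigs_eq_card_eigenvalues_lt hH' ht
  exact ⟨m, hm, by omega⟩

/-- Let `G'` be a connected factor of `G` obtained by deleting a set `S` of
`k ≤ β(G)` edges, and let `f⁽ⁿ⁾` be a non-degenerate eigenvector of `H(G)` for `λ_n(G)`. With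
`α^c_e = f_j/f_i` for every removed edge `e = (i,j)`, `i < j`, the vector `f⁽ⁿ⁾` is an
eigenvector of `H(G';α^c) = H(G) + Σ_{e ∈ S} B(e;α^c_e)` with eigenvalue `λ_n(G)`, and this
eigenvalue occupies a position `m` in the spectrum of `H(G';α^c)` with `|n - m| ≤ k`.
(Eigenvalue positions are indexed from `0` here.) -/
theorem stmt_9 {V : ℕ} (G : SimpleGraph (Fin V)) (hG : G.Connected) (q : Fin V → ℝ)
    (S : Finset (Fin V × Fin V))
    (hSadj : ∀ p ∈ S, G.Adj p.1 p.2) (hSlt : ∀ p ∈ S, p.1 < p.2)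
    (hk : (S.card : ℤ) ≤ betti G)
    (hconn : (G.deleteEdges ↑(S.image fun p => s(p.1, p.2))).Connected)
    (f : Fin V → ℝ) (n : Fin V)
    (heig : Ham G q *ᵥ f = sortedEigs (Ham_isHermitian G q) n • f)
    (hnz : ∀ v, f v ≠ 0)
    (hsimple : ∀ k : Fin V,
      sortedEigs (Ham_isHermitian G q) k = sortedEigs (Ham_isHermitian G q) n → k = n) :
    (Ham G q + ∑ p ∈ S, Bmat p.1 p.2 (f p.2 / f p.1)) *ᵥ f
        = sortedEigs (Ham_isHermitian G q) n • f ∧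
    ∃ m : Fin V,
      sortedEigs ((Ham_isHermitian G q).add
          (sum_Bmat_isHermitian S fun p => f p.2 / f p.1)) m
        = sortedEigs (Ham_isHermitian G q) n ∧
      ((n : ℤ) - (m : ℤ)).natAbs ≤ S.card :=
  stmt_9_general G q S hSlt f n heig hnz hsimple
end

section
/- Let P be a ν-partition of G with set S of removed edges, let f ∈ ℝ^V satisfy f_i ≠ 0 for every endpoint i of an edge of S, and for each e = (i,j) ∈ S with i < j set α_e = f_j/f_i. Then B(e;α_e) f = 0 for every e ∈ S, and consequently f is an eigenvector of H(G) with eigenvalue λ if and only if f is an eigenvector of H(P;α) with eigenvalue λ. In particular, if the restriction of f to each component P_k is an eigenvector of the corresponding block H(P_k;α) with the same eigenvalue λ for all k, then H(G) f = λ f. -/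
open Matrix

open Classical in
/-- The restriction of `f : Fin V → ℝ` to the connected component `c` of the graph `H`,
extended by zero to the other components. -/
noncomputable def restrictComp {V : ℕ} (H : SimpleGraph (Fin V)) (c : H.ConnectedComponent)
    (f : Fin V → ℝ) : Fin V → ℝ :=
  fun v => if H.connectedComponentMk v = c then f v else 0

/-! The block of `B(i,j;α)` on `{i, j}` is `[[-α, 1], [1, -1/α]]`, of rank one with kernel spanned
by `(1, α)`; with `α = f j / f i` the vector `f` lies in that kernel, so adding the `B(e;α_e)` to
`H(G)` does not change `H(G) f`. The last claim is linearity, since `f` is the sum of its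
restrictions to the components of `P`. -/

lemma Bmat_mulVec_apply {V : ℕ} {i j : Fin V} (hij : i ≠ j) (α : ℝ) (f : Fin V → ℝ)
    (a : Fin V) :
    (Bmat i j α *ᵥ f) a =
      (if a = i then -α * f i + f j else 0) + (if a = j then f i - f j / α else 0) := by
  simp only [Bmat, mulVec, dotProduct, of_apply, add_mul, ite_mul, zero_mul, one_mul,
    Finset.sum_add_distrib]
  by_cases hai : a = i <;> by_cases haj : a = j <;>
    simp [hai, haj, hij, Ne.symm hij, Finset.sum_ite_eq', div_eq_inv_mul, sub_eq_neg_add]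

lemma Bmat_mulVec_div_eq_zero {V : ℕ} {i j : Fin V} (hij : i ≠ j) {f : Fin V → ℝ}
    (hi : f i ≠ 0) (hj : f j ≠ 0) : Bmat i j (f j / f i) *ᵥ f = 0 := by
  funext a
  simp [Bmat_mulVec_apply hij, div_mul_cancel₀ _ hi, div_div_cancel₀ hj]

lemma sum_restrictComp {V : ℕ} (H : SimpleGraph (Fin V)) [Fintype H.ConnectedComponent]
    (f : Fin V → ℝ) : ∑ c, restrictComp H c f = f := by
  classical
  funext v
  simp only [Finset.sum_apply, restrictComp]
  exact Fintype.sum_ite_eq _ _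

lemma mulVec_eq_smul_of_forall_restrictComp {V : ℕ} (H : SimpleGraph (Fin V))
    (M : Matrix (Fin V) (Fin V) ℝ) (f : Fin V → ℝ) (lam : ℝ)
    (h : ∀ c, M *ᵥ restrictComp H c f = lam • restrictComp H c f) : M *ᵥ f = lam • f := by
  have := Fintype.ofFinite H.ConnectedComponent
  rw [← sum_restrictComp H f, mulVec_sum, Finset.smul_sum]
  exact Finset.sum_congr rfl fun c _ => h c

theorem stmt_13_general {V : ℕ} (G : SimpleGraph (Fin V)) (q : Fin V → ℝ)
    (S : Finset (Fin V × Fin V))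
    (hSlt : ∀ p ∈ S, p.1 < p.2)
    (P : SimpleGraph (Fin V))
    (f : Fin V → ℝ) (hnz : ∀ p ∈ S, f p.1 ≠ 0 ∧ f p.2 ≠ 0) :
    (∀ p ∈ S, Bmat p.1 p.2 (f p.2 / f p.1) *ᵥ f = 0) ∧
    (∀ lam : ℝ,
      Ham G q *ᵥ f = lam • f ↔
        (Ham G q + ∑ p ∈ S, Bmat p.1 p.2 (f p.2 / f p.1)) *ᵥ f = lam • f) ∧
    (∀ lam : ℝ,
      (∀ c : P.ConnectedComponent,
        restrictComp P c f ≠ 0 ∧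
        (Ham G q + ∑ p ∈ S, Bmat p.1 p.2 (f p.2 / f p.1)) *ᵥ restrictComp P c f
          = lam • restrictComp P c f) →
      Ham G q *ᵥ f = lam • f) := by
  have hB : ∀ p ∈ S, Bmat p.1 p.2 (f p.2 / f p.1) *ᵥ f = 0 := fun p hp =>
    Bmat_mulVec_div_eq_zero (hSlt p hp).ne (hnz p hp).1 (hnz p hp).2
  have hiff : ∀ lam : ℝ, Ham G q *ᵥ f = lam • f ↔
      (Ham G q + ∑ p ∈ S, Bmat p.1 p.2 (f p.2 / f p.1)) *ᵥ f = lam • f := by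
    intro lam
    rw [add_mulVec, sum_mulVec, Finset.sum_eq_zero hB, add_zero]
  refine ⟨hB, hiff, fun lam hc => (hiff lam).2 ?_⟩
  exact mulVec_eq_smul_of_forall_restrictComp P _ f lam fun c => (hc c).2

/-- Let `P` be a partition of `G` with removed edge set `S` (each removed
edge `(i,j)`, `i < j`, joins two distinct components of `P = G.deleteEdges S`), let `f` be
nonzero on all endpoints of removed edges, and set `α_e = f_j / f_i`. Then `B(e;α_e) f = 0`
for every `e ∈ S`; hence `f` is an eigenvector of `H(G)` with eigenvalue `λ` iff it is an
eigenvector of `H(P;α) = H(G) + Σ_e B(e;α_e)` with eigenvalue `λ`. In particular, if the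
restriction of `f` to each component `P_k` is an eigenvector of the corresponding block of
`H(P;α)` with one and the same eigenvalue `λ`, then `H(G) f = λ f`. -/
theorem stmt_13 {V : ℕ} (G : SimpleGraph (Fin V)) (hG : G.Connected) (q : Fin V → ℝ)
    (S : Finset (Fin V × Fin V))
    (hSadj : ∀ p ∈ S, G.Adj p.1 p.2) (hSlt : ∀ p ∈ S, p.1 < p.2)
    (P : SimpleGraph (Fin V)) (hPdef : P = G.deleteEdges ↑(S.image fun p => s(p.1, p.2)))
    (hpart : ∀ p ∈ S, ¬ P.Reachable p.1 p.2)
    (f : Fin V → ℝ) (hnz : ∀ p ∈ S, f p.1 ≠ 0 ∧ f p.2 ≠ 0) :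
    (∀ p ∈ S, Bmat p.1 p.2 (f p.2 / f p.1) *ᵥ f = 0) ∧
    (∀ lam : ℝ,
      Ham G q *ᵥ f = lam • f ↔
        (Ham G q + ∑ p ∈ S, Bmat p.1 p.2 (f p.2 / f p.1)) *ᵥ f = lam • f) ∧
    (∀ lam : ℝ,
      (∀ c : P.ConnectedComponent,
        restrictComp P c f ≠ 0 ∧
        (Ham G q + ∑ p ∈ S, Bmat p.1 p.2 (f p.2 / f p.1)) *ᵥ restrictComp P c f
          = lam • restrictComp P c f) →
      Ham G q *ᵥ f = lam • f) :=
  stmt_13_general G q S hSlt P f hnz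
end
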